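/- arXiv:0809.3294 — 4 statements merged into one kernel-verified Lean document; each statement's English description precedes it below -/
import Mathlib

section
/- Let α, c ∈ ℝ and u* ∈ ℝ with u* ≠ 0. There do not exist functions q, u : ℝ ∖ {0} → ℝ such that: (i) q and u are differentiable on (−∞,0) and on (0,∞) with q'(z) = u(z) and (c − 3u(z)²)·u'(z) = α·q(z) for all z ≠ 0; (ii) c − 3u(z)² ≠ 0 for all z ≠ 0; (iii) u is continuous on (0,∞) with u(z) → 0 as z → +∞ and u(z) → u* as z → 0⁺, and u(z) → −u* as z → 0⁻; (iv) the one-sided limits of q at 0 exist and are equal; and (v) the Rankine–Hugoniot jump condition c·(u(0⁺) − u(0⁻)) = u(0⁺)³ − u(0⁻)³ holds, where u(0±) denote the one-sided limits of u at 0. In other words, the short pulse equation has no piecewise smooth traveling pulse with a single symmetric discontinuity. -/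
open Filter

/-- Nonexistence of piecewise smooth traveling pulses with a single symmetric
discontinuity for the short pulse equation (Section 4.1). -/
theorem spe_no_piecewise_smooth_pulse (α c u₀ : ℝ) (hu₀ : u₀ ≠ 0) :
    ¬ ∃ (q u u' : ℝ → ℝ),
      (∀ z : ℝ, z ≠ 0 → HasDerivAt q (u z) z) ∧
      (∀ z : ℝ, z ≠ 0 → HasDerivAt u (u' z) z) ∧
      (∀ z : ℝ, z ≠ 0 → (c - 3 * u z ^ 2) * u' z = α * q z) ∧
      (∀ z : ℝ, z ≠ 0 → c - 3 * u z ^ 2 ≠ 0) ∧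
      ContinuousOn u (Set.Ioi 0) ∧
      Tendsto u atTop (nhds 0) ∧
      Tendsto u (nhdsWithin 0 (Set.Ioi 0)) (nhds u₀) ∧
      Tendsto u (nhdsWithin 0 (Set.Iio 0)) (nhds (-u₀)) ∧
      (∃ q₀ : ℝ, Tendsto q (nhdsWithin 0 (Set.Ioi 0)) (nhds q₀) ∧
        Tendsto q (nhdsWithin 0 (Set.Iio 0)) (nhds q₀)) ∧
      c * (u₀ - (-u₀)) = u₀ ^ 3 - (-u₀) ^ 3 := by
  rintro ⟨q, u, u', -, -, -, hne, hcont, htop, h0p, -, -, hRH⟩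
  -- Rankine–Hugoniot forces c = u₀²
  have hsq : 0 < u₀ ^ 2 := by positivity
  have hc : c = u₀ ^ 2 := by
    have h2 : 2 * u₀ * (c - u₀ ^ 2) = 0 := by linear_combination hRH
    rcases mul_eq_zero.1 h2 with h | h
    · exact absurd (by linarith) hu₀
    · linarith
  set f : ℝ → ℝ := fun z => c - 3 * u z ^ 2
  have hfcont : ContinuousOn f (Set.Ioi 0) := by
    exact continuousOn_const.sub (continuousOn_const.mul (hcont.pow 2))
  -- f > 0 eventually at top
  have hftop : Tendsto f atTop (nhds (u₀ ^ 2)) := by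
    have : Tendsto (fun z => c - 3 * u z ^ 2) atTop (nhds (c - 3 * 0 ^ 2)) :=
      tendsto_const_nhds.sub (tendsto_const_nhds.mul (htop.pow 2))
    have hval : c - 3 * (0:ℝ) ^ 2 = u₀ ^ 2 := by rw [hc]; ring
    rwa [hval] at this
  have hpos : ∀ᶠ z in atTop, 0 < f z :=
    hftop.eventually (eventually_gt_nhds hsq)
  obtain ⟨b, hb⟩ := (hpos.and (eventually_gt_atTop 0)).exists
  -- f < 0 eventually near 0⁺
  have hf0 : Tendsto f (nhdsWithin 0 (Set.Ioi 0)) (nhds (-(2 * u₀ ^ 2))) := by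
    have : Tendsto (fun z => c - 3 * u z ^ 2) (nhdsWithin 0 (Set.Ioi 0))
        (nhds (c - 3 * u₀ ^ 2)) :=
      tendsto_const_nhds.sub (tendsto_const_nhds.mul (h0p.pow 2))
    have hval : c - 3 * u₀ ^ 2 = -(2 * u₀ ^ 2) := by rw [hc]; ring
    rwa [hval] at this
  have hneg : ∀ᶠ z in nhdsWithin 0 (Set.Ioi 0), f z < 0 :=
    hf0.eventually (eventually_lt_nhds (by nlinarith))
  have hsmall : ∀ᶠ z in nhdsWithin 0 (Set.Ioi 0), z < b :=
    eventually_nhdsWithin_of_eventually_nhds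
      (tendsto_id.eventually_lt_const hb.2)
  obtain ⟨a, ⟨haneg, hab⟩, ha0⟩ :=
    ((hneg.and hsmall).and self_mem_nhdsWithin).exists
  have ha0 : (0:ℝ) < a := ha0
  -- IVT on [a, b]
  have hsub : Set.Icc a b ⊆ Set.Ioi 0 := fun x hx => lt_of_lt_of_le ha0 hx.1
  have := intermediate_value_Icc (le_of_lt hab) (hfcont.mono hsub)
  have h0mem : (0:ℝ) ∈ Set.Icc (f a) (f b) := ⟨le_of_lt haneg, le_of_lt hb.1⟩
  obtain ⟨z, hz, hfz⟩ := this h0mem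
  exact hne z (ne_of_gt (hsub hz)) hfz
end

section
/- Let α, β ∈ ℝ and let u : ℝ × ℝ → ℝ be a smooth function; set U(x,t) = ∫_{−∞}^x u(s,t) ds. Assume: (i) for all (x,t), ∂_t u(x,t) + α·U(x,t) + ∂_x(u(x,t)³) + β·∂_x³u(x,t) = 0 (the integrated RSPE); (ii) for each t, the functions x ↦ u(x,t) and x ↦ u(x,t)² are integrable, u(x,t), ∂_x u(x,t), ∂_x² u(x,t) → 0 as x → ±∞, and U(x,t) → 0 as x → +∞ (zero total mass); (iii) for each compact time interval K there is an integrable function g : ℝ → ℝ with |u(x,t)·∂_t u(x,t)| ≤ g(x) for all x ∈ ℝ and t ∈ K. Then the momentum M(u)(t) = ∫_ℝ u(x,t)² dx is independent of t. -/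
open Filter MeasureTheory

lemma rspe_aux_int_zero (α β : ℝ) (f Uf ut : ℝ → ℝ)
    (hfd : Differentiable ℝ f) (hf1 : Differentiable ℝ (deriv f))
    (hf2 : Differentiable ℝ (deriv (deriv f)))
    (hU' : ∀ x, HasDerivAt Uf (f x) x)
    (hpde : ∀ x, ut x = -(α * Uf x + 3 * f x ^ 2 * deriv f x
      + β * deriv (deriv (deriv f)) x))
    (hInt : Integrable (fun x => f x * ut x))
    (h0t : Tendsto f atTop (nhds 0)) (h0b : Tendsto f atBot (nhds 0))
    (h1t : Tendsto (deriv f) atTop (nhds 0)) (h1b : Tendsto (deriv f) atBot (nhds 0))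
    (h2t : Tendsto (deriv (deriv f)) atTop (nhds 0))
    (h2b : Tendsto (deriv (deriv f)) atBot (nhds 0))
    (hUt : Tendsto Uf atTop (nhds 0)) (hUb : Tendsto Uf atBot (nhds 0)) :
    ∫ x : ℝ, f x * ut x = 0 := by
  set F : ℝ → ℝ := fun x =>
    -(α / 2 * Uf x ^ 2 + 3 / 4 * f x ^ 4
      + β * (f x * deriv (deriv f) x - deriv f x ^ 2 / 2)) with hFdef
  have hF : ∀ x : ℝ, HasDerivAt F (f x * ut x) x := by
    intro x
    have h2 : HasDerivAt f (deriv f x) x := (hfd x).hasDerivAt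
    have h3 : HasDerivAt (deriv f) (deriv (deriv f) x) x := (hf1 x).hasDerivAt
    have h4 : HasDerivAt (deriv (deriv f)) (deriv (deriv (deriv f)) x) x := (hf2 x).hasDerivAt
    have hd := (((((hU' x).pow 2).const_mul (α/2)).add ((h2.pow 4).const_mul (3/4))).add
      (((h2.mul h4).sub ((h3.pow 2).div_const 2)).const_mul β)).neg
    refine hd.congr_deriv ?_
    rw [hpde x]; push_cast; ring
  have htop : Tendsto F atTop (nhds 0) := by
    have h := ((((hUt.pow 2).const_mul (α/2)).add ((h0t.pow 4).const_mul (3/4))).add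
      (((h0t.mul h2t).sub ((h1t.pow 2).div_const 2)).const_mul β)).neg
    have h' : Tendsto F atTop (nhds (-(α / 2 * (0:ℝ) ^ 2 + 3 / 4 * 0 ^ 4
      + β * (0 * 0 - 0 ^ 2 / 2)))) := h
    norm_num at h'
    exact h'
  have hbot : Tendsto F atBot (nhds 0) := by
    have h := ((((hUb.pow 2).const_mul (α/2)).add ((h0b.pow 4).const_mul (3/4))).add
      (((h0b.mul h2b).sub ((h1b.pow 2).div_const 2)).const_mul β)).neg
    have h' : Tendsto F atBot (nhds (-(α / 2 * (0:ℝ) ^ 2 + 3 / 4 * 0 ^ 4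
      + β * (0 * 0 - 0 ^ 2 / 2)))) := h
    norm_num at h'
    exact h'
  have := integral_of_hasDerivAt_of_tendsto hF hInt hbot htop
  simpa using this

/-- Conservation of the momentum M(u) = ∫ u² dx for solutions of the
integrated RSPE ∂ₜu + α∂ₓ⁻¹u + ∂ₓ(u³) + β∂ₓ³u = 0 with sufficient decay. -/
theorem rspe_momentum_conserved (α β : ℝ) (u : ℝ × ℝ → ℝ)
    (hu : ContDiff ℝ (⊤ : ℕ∞) u) (U : ℝ → ℝ → ℝ)
    (hU : ∀ x t : ℝ, U x t = ∫ s in Set.Iic x, u (s, t))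
    (hpde : ∀ x t : ℝ,
      deriv (fun t' => u (x, t')) t + α * U x t
        + deriv (fun x' => u (x', t) ^ 3) x
        + β * iteratedDeriv 3 (fun x' => u (x', t)) x = 0)
    (hint1 : ∀ t : ℝ, Integrable (fun x => u (x, t)))
    (hint2 : ∀ t : ℝ, Integrable (fun x => u (x, t) ^ 2))
    (hu0top : ∀ t : ℝ, Tendsto (fun x => u (x, t)) atTop (nhds 0))
    (hu0bot : ∀ t : ℝ, Tendsto (fun x => u (x, t)) atBot (nhds 0))
    (hu1top : ∀ t : ℝ, Tendsto (fun x => deriv (fun x' => u (x', t)) x) atTop (nhds 0))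
    (hu1bot : ∀ t : ℝ, Tendsto (fun x => deriv (fun x' => u (x', t)) x) atBot (nhds 0))
    (hu2top : ∀ t : ℝ, Tendsto (fun x => iteratedDeriv 2 (fun x' => u (x', t)) x) atTop (nhds 0))
    (hu2bot : ∀ t : ℝ, Tendsto (fun x => iteratedDeriv 2 (fun x' => u (x', t)) x) atBot (nhds 0))
    (hUtop : ∀ t : ℝ, Tendsto (fun x => U x t) atTop (nhds 0))
    (hdom : ∀ a b : ℝ, ∃ g : ℝ → ℝ, Integrable g ∧
      ∀ x : ℝ, ∀ t ∈ Set.Icc a b,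
        |u (x, t) * deriv (fun t' => u (x, t')) t| ≤ g x) :
    ∀ t₁ t₂ : ℝ, (∫ x : ℝ, u (x, t₁) ^ 2) = ∫ x : ℝ, u (x, t₂) ^ 2 := by
  intro t₁ t₂
  have hud : Differentiable ℝ u := hu.differentiable (by simp)
  have hcu : Continuous u := hu.continuous
  -- time derivative representation
  have hutd : ∀ x t : ℝ, HasDerivAt (fun t' => u (x, t')) (fderiv ℝ u (x, t) (0, 1)) t := by
    intro x t
    have h1 : HasDerivAt (fun t' : ℝ => ((x, t') : ℝ × ℝ)) (((0 : ℝ), (1 : ℝ)) : ℝ × ℝ) t :=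
      (hasDerivAt_const t x).prodMk (hasDerivAt_id t)
    exact (hud (x, t)).hasFDerivAt.comp_hasDerivAt t h1
  have hutr : ∀ x t : ℝ, deriv (fun t' => u (x, t')) t = fderiv ℝ u (x, t) (0, 1) :=
    fun x t => (hutd x t).deriv
  have hutc : Continuous fun p : ℝ × ℝ => fderiv ℝ u p (0, 1) :=
    (hu.continuous_fderiv (by simp)).clm_apply continuous_const
  -- space regularity
  have hfx : ∀ t : ℝ, ContDiff ℝ (⊤ : ℕ∞) (fun x => u (x, t)) :=
    fun t => hu.comp (contDiff_id.prodMk contDiff_const)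
  have hfd : ∀ t : ℝ, Differentiable ℝ (fun x => u (x, t)) :=
    fun t => (hfx t).differentiable (by simp)
  have hfx1 : ∀ t : ℝ, ContDiff ℝ (⊤ : ℕ∞) (deriv (fun x => u (x, t))) :=
    fun t => (contDiff_infty_iff_deriv.mp ((hfx t).of_le (by simp))).2
  have hfx2 : ∀ t : ℝ, ContDiff ℝ (⊤ : ℕ∞) (deriv (deriv (fun x => u (x, t)))) :=
    fun t => (contDiff_infty_iff_deriv.mp (hfx1 t)).2
  -- iterated derivative rewrites
  have hit2 : ∀ t : ℝ, iteratedDeriv 2 (fun x' => u (x', t))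
      = deriv (deriv (fun x' => u (x', t))) := by
    intro t
    rw [show (2 : ℕ) = 1 + 1 from rfl, iteratedDeriv_succ, iteratedDeriv_one]
  have hit3 : ∀ t : ℝ, iteratedDeriv 3 (fun x' => u (x', t))
      = deriv (deriv (deriv (fun x' => u (x', t)))) := by
    intro t
    rw [show (3 : ℕ) = 2 + 1 from rfl, iteratedDeriv_succ, hit2]
  -- derivative of U in x
  have hU' : ∀ t x : ℝ, HasDerivAt (fun x' => U x' t) (u (x, t)) x := by
    intro t x
    have hcut : Continuous fun s => u (s, t) := (hfx t).continuous
    have hder : HasDerivAt (fun x' => U 0 t + ∫ s in (0:ℝ)..x', u (s, t)) (u (x, t)) x :=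
      ((intervalIntegral.integral_hasDerivAt_right ((hint1 t).intervalIntegrable)
        (hcut.stronglyMeasurableAtFilter _ _) hcut.continuousAt).const_add (U 0 t))
    apply hder.congr_of_eventuallyEq
    apply Eventually.of_forall
    intro x'
    show U x' t = U 0 t + ∫ s in (0:ℝ)..x', u (s, t)
    rw [hU, hU]
    have h := intervalIntegral.integral_Iic_sub_Iic ((hint1 t).integrableOn)
      ((hint1 t).integrableOn) (a := 0) (b := x')
    linarith [h]
  -- U tends to 0 at -∞
  have hUbot : ∀ t : ℝ, Tendsto (fun x => U x t) atBot (nhds 0) := by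
    intro t
    have h : Tendsto (fun x : ℝ => ∫ s : ℝ, Set.indicator (Set.Iic x) (fun s => u (s, t)) s)
        atBot (nhds (∫ s : ℝ, (0 : ℝ))) := by
      apply tendsto_integral_filter_of_dominated_convergence (fun s => |u (s, t)|)
      · exact Eventually.of_forall fun x =>
          ((hfx t).continuous.aestronglyMeasurable).indicator measurableSet_Iic
      · refine Eventually.of_forall fun x => Eventually.of_forall fun s => ?_
        rw [Real.norm_eq_abs]
        by_cases hs : s ∈ Set.Iic x
        · rw [Set.indicator_of_mem hs]
        · rw [Set.indicator_of_notMem hs]; simp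
      · exact (hint1 t).abs
      · refine Eventually.of_forall fun s => ?_
        have : (fun _ : ℝ => (0 : ℝ)) =ᶠ[atBot]
            fun x => Set.indicator (Set.Iic x) (fun s => u (s, t)) s := by
          filter_upwards [eventually_lt_atBot s] with x hx
          rw [Set.indicator_of_notMem (by simpa using hx.not_ge)]
        exact tendsto_const_nhds.congr' this
    simp only [integral_zero] at h
    refine h.congr fun x => ?_
    rw [hU, integral_indicator measurableSet_Iic]
  -- the key vanishing integral
  have key : ∀ t : ℝ, (∫ x : ℝ, u (x, t) * deriv (fun t' => u (x, t')) t) = 0 := by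
    intro t
    obtain ⟨g, hg, hgb⟩ := hdom t t
    have hutcx : Continuous fun x => deriv (fun t' => u (x, t')) t := by
      have : (fun x => deriv (fun t' => u (x, t')) t)
          = fun x => fderiv ℝ u (x, t) (0, 1) := funext fun x => hutr x t
      rw [this]
      exact hutc.comp (continuous_id.prodMk continuous_const)
    have hInt : Integrable (fun x => u (x, t) * deriv (fun t' => u (x, t')) t) := by
      refine hg.mono' (((hfx t).continuous.mul hutcx).aestronglyMeasurable)
        (Eventually.of_forall fun x => ?_)
      rw [Real.norm_eq_abs]
      exact hgb x t ⟨le_refl t, le_refl t⟩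
    refine rspe_aux_int_zero α β (fun x => u (x, t)) (fun x => U x t)
      (fun x => deriv (fun t' => u (x, t')) t)
      (hfd t) ((hfx1 t).differentiable (by simp))
      ((hfx2 t).differentiable (by simp))
      (hU' t) ?_ hInt (hu0top t) (hu0bot t) (hu1top t) (hu1bot t)
      ?_ ?_ (hUtop t) (hUbot t)
    · intro x
      have hpd := hpde x t
      rw [hit3 t] at hpd
      have hd3 : deriv (fun x' => u (x', t) ^ 3) x
          = 3 * u (x, t) ^ 2 * deriv (fun x' => u (x', t)) x := by
        have h : HasDerivAt (fun x' => u (x', t) ^ 3)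
            (((3 : ℕ) : ℝ) * u (x, t) ^ 2 * deriv (fun x' => u (x', t)) x) x :=
          HasDerivAt.pow ((hfd t x).hasDerivAt) 3
        rw [h.deriv]; norm_num
      rw [hd3] at hpd
      linarith [hpd]
    · have h := hu2top t
      rw [show (fun x => iteratedDeriv 2 (fun x' => u (x', t)) x)
        = iteratedDeriv 2 (fun x' => u (x', t)) from rfl, hit2 t] at h
      exact h
    · have h := hu2bot t
      rw [show (fun x => iteratedDeriv 2 (fun x' => u (x', t)) x)
        = iteratedDeriv 2 (fun x' => u (x', t)) from rfl, hit2 t] at h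
      exact h
  -- differentiation under the integral sign
  have hM : ∀ t₀ : ℝ, HasDerivAt (fun t => ∫ x : ℝ, u (x, t) ^ 2) 0 t₀ := by
    intro t₀
    obtain ⟨g, hg, hgb⟩ := hdom (t₀ - 1) (t₀ + 1)
    have hmeas : ∀ t : ℝ, AEStronglyMeasurable (fun x : ℝ => u (x, t) ^ 2) volume :=
      fun t => (((hfx t).continuous.pow 2)).aestronglyMeasurable
    have hmeas' : AEStronglyMeasurable
        (fun x : ℝ => 2 * (u (x, t₀) * deriv (fun t' => u (x, t')) t₀)) volume := by
      have hutcx : Continuous fun x => deriv (fun t' => u (x, t')) t₀ := by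
        have : (fun x => deriv (fun t' => u (x, t')) t₀)
            = fun x => fderiv ℝ u (x, t₀) (0, 1) := funext fun x => hutr x t₀
        rw [this]
        exact hutc.comp (continuous_id.prodMk continuous_const)
      exact (continuous_const.mul ((hfx t₀).continuous.mul hutcx)).aestronglyMeasurable
    have hband : ∀ᵐ x : ℝ ∂volume, ∀ t ∈ Metric.ball t₀ 1,
        ‖2 * (u (x, t) * deriv (fun t' => u (x, t')) t)‖ ≤ 2 * g x := by
      refine Eventually.of_forall fun x => fun t ht => ?_
      have htI : t ∈ Set.Icc (t₀ - 1) (t₀ + 1) := by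
        rw [Metric.mem_ball, Real.dist_eq] at ht
        have := abs_lt.mp ht
        constructor <;> linarith [this.1, this.2]
      have hb := hgb x t htI
      rw [Real.norm_eq_abs, abs_mul, abs_two]
      linarith [hb, abs_nonneg (u (x, t) * deriv (fun t' => u (x, t')) t)]
    have hdiff : ∀ᵐ x : ℝ ∂volume, ∀ t ∈ Metric.ball t₀ 1,
        HasDerivAt (fun t' => u (x, t') ^ 2)
          (2 * (u (x, t) * deriv (fun t' => u (x, t')) t)) t := by
      refine Eventually.of_forall fun x => fun t _ => ?_
      have h1 := (hutd x t).pow 2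
      refine h1.congr_deriv ?_
      rw [hutr]
      push_cast
      ring
    have h := hasDerivAt_integral_of_dominated_loc_of_deriv_le (Metric.ball_mem_nhds t₀ one_pos)
      (Eventually.of_forall hmeas) (hint2 t₀) hmeas' hband (hg.const_mul 2) hdiff
    have h2 := h.2
    rw [MeasureTheory.integral_const_mul, key t₀, mul_zero] at h2
    exact h2
  exact is_const_of_deriv_eq_zero (fun t => (hM t).differentiableAt)
    (fun t => (hM t).deriv) t₁ t₂
end

section
/- Let k ≥ 2 be an integer and let a ∈ {−1, 1}. If u : ℝ → ℝ is twice continuously differentiable, satisfies u''(z) = −u(z) + a·u(z)^k for all z ∈ ℝ, and u(z) → 0 and u'(z) → 0 as z → −∞, then u(z) = 0 for all z ∈ ℝ. In other words, when the linear part at the origin is a center, the planar equation u'' = −u + a·u^k has no nonzero orbit homoclinic to the origin. -/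
open Filter Topology

/-!
The energy `v²/2 + u²/2 - a uᵏ⁺¹/(k+1)` is a first integral of `u'' = -u + a uᵏ`; since the
orbit comes from the origin, it vanishes identically along it. Near the origin the quadratic
part dominates (`|a uᵏ⁺¹|/(k+1) ≤ u²/3` when `|u| ≤ 1`), so zero energy forces `u = 0` wherever
`|u| < 1`. Thus `{u = 0} = {|u| < 1}` is clopen and nonempty, hence all of `ℝ`.
-/

noncomputable def layerEnergy (a : ℝ) (k : ℕ) (x y : ℝ) : ℝ :=
  y ^ 2 / 2 + x ^ 2 / 2 - a * x ^ (k + 1) / (k + 1)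

theorem hasDerivAt_layerEnergy {a : ℝ} {k : ℕ} {u v : ℝ → ℝ} {z : ℝ}
    (hu : HasDerivAt u (v z) z) (hv : HasDerivAt v (-u z + a * u z ^ k) z) :
    HasDerivAt (fun t => layerEnergy a k (u t) (v t)) 0 z := by
  refine ((((hv.pow 2).div_const 2).add ((hu.pow 2).div_const 2)).sub
    (((hu.pow (k + 1)).const_mul a).div_const ((k : ℝ) + 1))).congr_deriv ?_
  push_cast
  field_simp
  ring

theorem Filter.Tendsto.layerEnergy {α : Type*} {l : Filter α} {u v : α → ℝ} (a : ℝ) (k : ℕ)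
    (hu : Tendsto u l (𝓝 0)) (hv : Tendsto v l (𝓝 0)) :
    Tendsto (fun t => layerEnergy a k (u t) (v t)) l (𝓝 0) := by
  have h := (((hv.pow 2).div_const 2).add ((hu.pow 2).div_const 2)).sub
    (((hu.pow (k + 1)).const_mul a).div_const ((k : ℝ) + 1))
  simpa [_root_.layerEnergy] using h

theorem eq_zero_of_layerEnergy_eq_zero {a x y : ℝ} {k : ℕ} (hk : 2 ≤ k) (ha : |a| ≤ 1)
    (hx : |x| ≤ 1) (hE : layerEnergy a k x y = 0) : x = 0 := by
  have hk3 : (3 : ℝ) ≤ k + 1 := by exact_mod_cast Nat.succ_le_succ hk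
  have hpow : a * x ^ (k + 1) ≤ x ^ 2 :=
    calc a * x ^ (k + 1) ≤ |a| * |x| ^ (k + 1) := by
          rw [← abs_pow, ← abs_mul]; exact le_abs_self _
      _ ≤ 1 * |x| ^ 2 :=
          mul_le_mul ha (pow_le_pow_of_le_one (abs_nonneg x) hx (by omega)) (by positivity)
            zero_le_one
      _ = x ^ 2 := by rw [one_mul, sq_abs]
  have hsq : x ^ 2 / 2 ≤ x ^ 2 / 3 :=
    calc x ^ 2 / 2 ≤ y ^ 2 / 2 + x ^ 2 / 2 := by linarith [sq_nonneg y]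
      _ = a * x ^ (k + 1) / (k + 1) := by unfold layerEnergy at hE; linarith
      _ ≤ x ^ 2 / (k + 1) := by gcongr
      _ ≤ x ^ 2 / 3 := div_le_div_of_nonneg_left (sq_nonneg x) (by norm_num) hk3
  nlinarith [sq_nonneg x]

theorem eq_of_hasDerivAt_zero_of_tendsto_atBot {E : Type*} [NormedAddCommGroup E]
    [NormedSpace ℝ E] {f : ℝ → E} {c : E} (hf : ∀ x, HasDerivAt f 0 x)
    (hc : Tendsto f atBot (𝓝 c)) (x : ℝ) : f x = c := by
  have hconst : f = fun _ => f x :=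
    funext fun y => is_const_of_deriv_eq_zero (fun z => (hf z).differentiableAt)
      (fun z => (hf z).deriv) y x
  rw [hconst] at hc
  exact tendsto_nhds_unique tendsto_const_nhds hc

theorem Continuous.eq_zero_of_forall_norm_lt_imp {X E : Type*} [TopologicalSpace X]
    [PreconnectedSpace X] [NormedAddCommGroup E] {f : X → E} (hf : Continuous f) {r : ℝ}
    (hr : 0 < r) (hgap : ∀ x, ‖f x‖ < r → f x = 0) {x₀ : X} (hx₀ : ‖f x₀‖ < r) (x : X) :
    f x = 0 := by
  have hset : {x | f x = 0} = {x | ‖f x‖ < r} :=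
    Set.ext fun x => ⟨fun h => by rw [Set.mem_ofPred_eq, h, norm_zero]; exact hr, hgap x⟩
  have hclopen : IsClopen {x | f x = 0} :=
    ⟨isClosed_eq hf continuous_const, hset ▸ isOpen_lt hf.norm continuous_const⟩
  exact (hclopen.eq_univ ⟨x₀, hgap x₀ hx₀⟩).superset (Set.mem_univ x)

/-- Proposition 4.7 (nonexistence direction): when the linear part at the
origin is a center, the planar layer equation u'' = −u + a·uᵏ has no nonzero
orbit homoclinic to the origin. -/
theorem gkdv_center_no_homoclinic (k : ℕ) (hk : 2 ≤ k) (a : ℝ)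
    (ha : a = 1 ∨ a = -1) (u : ℝ → ℝ) (hu : ContDiff ℝ 2 u)
    (heq : ∀ z : ℝ, deriv (deriv u) z = -u z + a * u z ^ k)
    (hubot : Tendsto u atBot (nhds 0))
    (hu'bot : Tendsto (deriv u) atBot (nhds 0)) :
    ∀ z : ℝ, u z = 0 := by
  have ha1 : |a| ≤ 1 := by rcases ha with rfl | rfl <;> norm_num
  have hu' : ∀ z, HasDerivAt u (deriv u z) z :=
    fun z => (hu.differentiable (by norm_num) z).hasDerivAt
  have hu'' : ∀ z, HasDerivAt (deriv u) (-u z + a * u z ^ k) z :=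
    fun z => heq z ▸ (hu.differentiable_deriv_two z).hasDerivAt
  have henergy : ∀ z, layerEnergy a k (u z) (deriv u z) = 0 :=
    eq_of_hasDerivAt_zero_of_tendsto_atBot
      (fun z => hasDerivAt_layerEnergy (hu' z) (hu'' z)) (hubot.layerEnergy a k hu'bot)
  have hgap : ∀ z, ‖u z‖ < 1 → u z = 0 :=
    fun z hz => eq_zero_of_layerEnergy_eq_zero hk ha1 hz.le (henergy z)
  obtain ⟨z₀, hz₀⟩ := (hubot.eventually (Metric.ball_mem_nhds 0 one_pos)).exists
  exact hu.continuous.eq_zero_of_forall_norm_lt_imp one_pos hgap (by simpa using hz₀)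
end

section
/- Let k ≥ 2 be an integer and let q : ℝ → ℝ be defined by q(ζ) = ((k+1)/2)^{1/(k−1)}·(sech((k−1)ζ/2))^{2/(k−1)}. Then q is integrable on ℝ and the Melnikov integral M = −∫_{−∞}^{∞} q(ζ)·(∫_{−∞}^{ζ} q(s) ds) dζ satisfies M = −2·(∫_{0}^{∞} q(ζ) dζ)². In particular M < 0, so M ≠ 0, and hence the homoclinic orbit of the ε = 0 layer problem breaks for ε > 0. -/
open MeasureTheory Set Filter Topology

/-!
For any integrable continuous `q` with primitive `F x = ∫_{-∞}^x q` we have `q · F = (F² / 2)'`,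
`F → 0` at `-∞` and `F → ∫ q` at `+∞`, so `∫ q · F = (∫ q)² / 2`. For the soliton, evenness
gives `∫ q = 2 ∫₀^∞ q`, hence `M = -2 (∫₀^∞ q)²`, and `q > 0` makes this strictly negative.
Integrability of `q` comes from `sech y ≤ 2 e^{-|y|}`.
-/

theorem integrable_comp_abs_iff {E : Type*} [NormedAddCommGroup E] {f : ℝ → E} :
    Integrable (fun x => f |x|) ↔ IntegrableOn f (Ioi 0) := by
  have hIoi : IntegrableOn (fun x => f |x|) (Ioi 0) ↔ IntegrableOn f (Ioi 0) :=
    integrableOn_congr_fun (fun x hx => by rw [abs_of_pos (mem_Ioi.1 hx)]) measurableSet_Ioi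
  refine ⟨fun h => hIoi.1 h.integrableOn, fun h => ?_⟩
  have hIic : IntegrableOn (fun x => f |x|) (Iic 0) := by
    have hneg : MeasurableEmbedding fun x : ℝ => -x := (Homeomorph.neg ℝ).measurableEmbedding
    rw [← Measure.map_neg_eq_self (volume : Measure ℝ), hneg.integrableOn_map_iff]
    simp_rw [Function.comp_def, abs_neg, neg_preimage, neg_Iic, neg_zero]
    exact (integrableOn_Ici_iff_integrableOn_Ioi (by finiteness)).2 (hIoi.2 h)
  rw [← integrableOn_univ, ← Iic_union_Ioi (a := (0 : ℝ))]
  exact hIic.union (hIoi.2 h)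

theorem integrable_exp_neg_mul_abs {b : ℝ} (hb : 0 < b) :
    Integrable fun x : ℝ => Real.exp (-b * |x|) :=
  integrable_comp_abs_iff.2 (exp_neg_integrableOn_Ioi 0 hb)

theorem one_div_cosh_le_two_mul_exp_neg_abs (x : ℝ) :
    1 / Real.cosh x ≤ 2 * Real.exp (-|x|) := by
  have hcosh : Real.exp |x| / 2 ≤ Real.cosh x := by
    rw [← Real.cosh_abs, Real.cosh_eq]
    linarith [Real.exp_pos (-|x|)]
  calc 1 / Real.cosh x ≤ 1 / (Real.exp |x| / 2) :=
        one_div_le_one_div_of_le (by positivity) hcosh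
    _ = 2 * Real.exp (-|x|) := by rw [Real.exp_neg]; field_simp

theorem continuous_one_div_cosh_mul_rpow (a p : ℝ) :
    Continuous fun x : ℝ => (1 / Real.cosh (a * x)) ^ p :=
  (continuous_const.div (by fun_prop) fun x => (Real.cosh_pos _).ne').rpow_const
    fun x => Or.inl (one_div_pos.2 (Real.cosh_pos _)).ne'

theorem integrable_one_div_cosh_mul_rpow {a p : ℝ} (ha : 0 < a) (hp : 0 < p) :
    Integrable fun x : ℝ => (1 / Real.cosh (a * x)) ^ p := by
  refine ((integrable_exp_neg_mul_abs (mul_pos ha hp)).const_mul (2 ^ p)).mono'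
    (continuous_one_div_cosh_mul_rpow a p).aestronglyMeasurable (ae_of_all _ fun x => ?_)
  have hsech : 0 ≤ 1 / Real.cosh (a * x) := (one_div_pos.2 (Real.cosh_pos _)).le
  calc ‖(1 / Real.cosh (a * x)) ^ p‖ = (1 / Real.cosh (a * x)) ^ p :=
        Real.norm_of_nonneg (Real.rpow_nonneg hsech p)
    _ ≤ (2 * Real.exp (-|a * x|)) ^ p :=
        Real.rpow_le_rpow hsech (one_div_cosh_le_two_mul_exp_neg_abs _) hp.le
    _ = 2 ^ p * Real.exp (-(a * p) * |x|) := by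
        rw [Real.mul_rpow zero_le_two (Real.exp_pos _).le, ← Real.exp_mul, abs_mul,
          abs_of_pos ha]
        ring_nf

section Primitive

variable {E : Type*} [NormedAddCommGroup E] [NormedSpace ℝ E] {f : ℝ → E}

theorem tendsto_setIntegral_Iic_atTop (hf : Integrable f) :
    Tendsto (fun x => ∫ t in Iic x, f t) atTop (𝓝 (∫ t, f t)) := by
  have h := tendsto_setIntegral_of_monotone (fun x : ℝ => measurableSet_Iic)
    (fun _ _ h => Iic_subset_Iic.2 h) hf.integrableOn
  rwa [iUnion_Iic, setIntegral_univ] at h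

theorem tendsto_setIntegral_Iic_atBot (hf : Integrable f) :
    Tendsto (fun x => ∫ t in Iic x, f t) atBot (𝓝 0) := by
  have h := tendsto_setIntegral_of_antitone (s := fun x : ℝ => Iic (-x))
    (fun _ => measurableSet_Iic) (fun _ _ h => Iic_subset_Iic.2 (neg_le_neg h))
    ⟨0, hf.integrableOn⟩
  have hempty : ⋂ x : ℝ, Iic (-x) = ∅ :=
    iInter_Iic_eq_empty_iff.2 fun ⟨b, hb⟩ => by
      have := hb ⟨-(b - 1), neg_neg _⟩
      linarith
  rw [hempty, Measure.restrict_empty, integral_zero_measure] at h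
  simpa [Function.comp_def] using h.comp tendsto_neg_atBot_atTop

theorem hasDerivAt_setIntegral_Iic [CompleteSpace E] (hf : Integrable f) (hc : Continuous f)
    (x : ℝ) : HasDerivAt (fun y => ∫ t in Iic y, f t) (f x) x := by
  have hF : (fun y => ∫ t in Iic y, f t) =
      fun y => (∫ t in Iic 0, f t) + ∫ t in 0..y, f t := by
    ext y
    rw [← intervalIntegral.integral_Iic_sub_Iic hf.integrableOn hf.integrableOn, add_sub_cancel]
  rw [hF]
  exact (intervalIntegral.integral_hasDerivAt_right hf.intervalIntegrable
    (hc.stronglyMeasurableAtFilter _ _) hc.continuousAt).const_add _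

theorem norm_setIntegral_Iic_le (hf : Integrable f) (x : ℝ) :
    ‖∫ t in Iic x, f t‖ ≤ ∫ t, ‖f t‖ :=
  (norm_integral_le_integral_norm _).trans
    (setIntegral_le_integral hf.norm (Eventually.of_forall fun _ => norm_nonneg _))

end Primitive

theorem integral_mul_setIntegral_Iic_eq_sq_div_two {f : ℝ → ℝ} (hf : Integrable f)
    (hc : Continuous f) :
    ∫ x, f x * ∫ t in Iic x, f t = (∫ x, f x) ^ 2 / 2 := by
  set F := fun x => ∫ t in Iic x, f t
  have hFd := hasDerivAt_setIntegral_Iic hf hc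
  have hF_cont : Continuous F := continuous_iff_continuousAt.2 fun x => (hFd x).continuousAt
  have hfF_int : Integrable fun x => f x * F x := by
    refine (hf.norm.mul_const (∫ t, ‖f t‖)).mono' ?_ (Eventually.of_forall fun x => ?_)
    · exact (hc.mul hF_cont).aestronglyMeasurable
    · rw [norm_mul]
      exact mul_le_mul_of_nonneg_left (norm_setIntegral_Iic_le hf x) (norm_nonneg (f x))
  have := integral_of_hasDerivAt_of_tendsto (f := fun x => F x ^ 2 / 2)
    (fun x => (((hFd x).pow 2).div_const 2).congr_deriv (by ring)) hfF_int
    (((tendsto_setIntegral_Iic_atBot hf).pow 2).div_const 2)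
    (((tendsto_setIntegral_Iic_atTop hf).pow 2).div_const 2)
  simpa using this

/-- The Melnikov integral M = −∫ q·(∫_{−∞}^ζ q) dζ along the gKdV soliton
equals −2(∫₀^∞ q)², hence is negative and nonzero: the homoclinic orbit of
the ε = 0 layer problem breaks for ε > 0. -/
theorem grspe_melnikov_integral_nonzero (k : ℕ) (hk : 2 ≤ k) (q : ℝ → ℝ)
    (hq : ∀ ζ : ℝ, q ζ = (((k : ℝ) + 1) / 2) ^ ((1 : ℝ) / ((k : ℝ) - 1)) *
        (1 / Real.cosh (((k : ℝ) - 1) / 2 * ζ)) ^ ((2 : ℝ) / ((k : ℝ) - 1))) :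
    Integrable q ∧
    (-∫ ζ : ℝ, q ζ * ∫ s in Set.Iic ζ, q s) =
      -2 * (∫ ζ in Set.Ioi (0 : ℝ), q ζ) ^ 2 ∧
    (-∫ ζ : ℝ, q ζ * ∫ s in Set.Iic ζ, q s) < 0 := by
  have hk1 : (0 : ℝ) < (k : ℝ) - 1 := by
    have : (2 : ℝ) ≤ k := by exact_mod_cast hk
    linarith
  set C := (((k : ℝ) + 1) / 2) ^ ((1 : ℝ) / ((k : ℝ) - 1))
  set a := ((k : ℝ) - 1) / 2
  have ha : 0 < a := by positivity
  have hC : 0 < C := by positivity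
  have hq_pos (ζ : ℝ) : 0 < q ζ := by
    rw [hq]
    exact mul_pos hC (Real.rpow_pos_of_pos (one_div_pos.2 (Real.cosh_pos _)) _)
  have hq_int : Integrable q := by
    rw [funext hq]
    exact (integrable_one_div_cosh_mul_rpow ha (by positivity)).const_mul C
  have hq_cont : Continuous q := by
    rw [funext hq]
    exact continuous_const.mul (continuous_one_div_cosh_mul_rpow _ _)
  have hq_abs (ζ : ℝ) : q |ζ| = q ζ := by
    rw [hq, hq, ← Real.cosh_abs (a * ζ), abs_mul, abs_of_pos ha]
  have h_total : ∫ ζ, q ζ = 2 * ∫ ζ in Ioi (0 : ℝ), q ζ := by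
    simpa only [hq_abs] using integral_comp_abs (f := q)
  have h_pos : 0 < ∫ ζ in Ioi (0 : ℝ), q ζ := by
    have := integral_pos_of_integrable_nonneg_nonzero hq_cont hq_int
      (fun ζ => (hq_pos ζ).le) (hq_pos 0).ne'
    linarith
  have hM : (-∫ ζ : ℝ, q ζ * ∫ s in Set.Iic ζ, q s) =
      -2 * (∫ ζ in Set.Ioi (0 : ℝ), q ζ) ^ 2 := by
    rw [integral_mul_setIntegral_Iic_eq_sq_div_two hq_int hq_cont, h_total]
    ring
  exact ⟨hq_int, hM, by rw [hM]; linarith [pow_pos h_pos 2]⟩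
end
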